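/- Let (A,e) be an order unit space with Lip norm L, and let ν be any state on A. If d is the diameter of the state space in the metric ρ_L, then for every a ∈ A one has ‖a‖ ≤ (L(a) + |ν(a)|)(1 + d). -/

import Mathlib

/-!
The order-unit norm is `‖x‖ = max (N x) (N (-x))` for the sublinear gauge
`N x = inf {r | x ≤ r • e}`. Hahn–Banach, applied to `N` at whichever of `a`, `-a` realises this
maximum, gives a linear `μ ≤ N`; then `μ e = 1` and `|μ| ≤ ‖·‖`, so `μ` is a state, and
`|μ a| = ‖a‖`. Scaling `a` into the unit ball of `L` gives `|μ a - ν a| ≤ d L(a)`, hence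
`‖a‖ ≤ d L(a) + |ν a|`.
-/

theorem exists_linearMap_le_sublinear_eq {E : Type*} [AddCommGroup E] [Module ℝ E] (N : E → ℝ)
    (N_hom : ∀ c : ℝ, 0 < c → ∀ x, N (c • x) = c * N x)
    (N_add : ∀ x y, N (x + y) ≤ N x + N y) (x : E) :
    ∃ g : E →ₗ[ℝ] ℝ, (∀ y, g y ≤ N y) ∧ g x = N x := by
  have N_zero : N 0 = 0 := by
    have := N_hom 2 two_pos 0
    rw [smul_zero] at this
    linarith
  have hker : ∀ c : ℝ, c • x = 0 → RingHom.id ℝ c • N x = 0 := by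
    intro c hc
    rcases eq_or_ne c 0 with rfl | hc0
    · exact zero_smul _ _
    · rw [(smul_eq_zero.1 hc).resolve_left hc0, N_zero, smul_zero]
  let f := LinearPMap.mkSpanSingleton' x (N x) hker
  have hf : ∀ y : f.domain, f y ≤ N y := by
    rintro ⟨_, hy⟩
    obtain ⟨t, rfl⟩ := Submodule.mem_span_singleton.1 hy
    rw [LinearPMap.mkSpanSingleton'_apply, RingHom.id_apply, smul_eq_mul]
    change t * N x ≤ N (t • x)
    rcases lt_trichotomy t 0 with ht | rfl | ht
    · have hx : 0 ≤ N x + N (-x) := by simpa [N_zero] using N_add x (-x)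
      rw [← neg_neg t, neg_smul, ← smul_neg, N_hom _ (neg_pos.2 ht)]
      nlinarith
    · simp [N_zero]
    · rw [N_hom t ht]
  obtain ⟨g, hgf, hgN⟩ := exists_extension_of_le_sublinear f N N_hom N_add hf
  exact ⟨g, hgN, (hgf ⟨x, Submodule.mem_span_singleton_self x⟩).trans
    (LinearPMap.mkSpanSingleton'_apply_self _ _ _ _)⟩

theorem abs_le_mul_of_forall_le_one {E F : Type*} [AddCommGroup E] [Module ℝ E] [FunLike F E ℝ]
    [LinearMapClass F ℝ E ℝ] (p : Seminorm ℝ E) (f : F) {d : ℝ}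
    (h : ∀ x, p x ≤ 1 → |f x| ≤ d) (x : E) : |f x| ≤ d * p x := by
  rcases (apply_nonneg p x).eq_or_lt with hx | hx
  · -- `p` vanishes on the line through `x`, where `|f| ≤ d` forces `f x = 0`
    rw [← hx, mul_zero]
    by_contra! hfx
    have := h (((|d| + 1) / |f x|) • x) (by simp [map_smul_eq_mul, ← hx])
    rw [map_smul, smul_eq_mul, abs_mul, abs_of_pos (by positivity),
      div_mul_cancel₀ _ hfx.ne'] at this
    linarith [le_abs_self d]
  · have := h ((p x)⁻¹ • x) (by rw [map_smul_eq_mul, norm_inv, Real.norm_of_nonneg hx.le,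
      inv_mul_cancel₀ hx.ne'])
    rw [map_smul, smul_eq_mul, abs_mul, abs_of_pos (inv_pos.2 hx), inv_mul_le_iff₀ hx] at this
    linarith

section OrderUnit

variable {A : Type*} [AddCommGroup A] [PartialOrder A] [IsOrderedAddMonoid A] [Module ℝ A]
  [PosSMulMono ℝ A] {e : A}

theorem nonneg_of_nonneg_smul_of_pos (he : 0 < e) {t : ℝ} (h : 0 ≤ t • e) : 0 ≤ t := by
  by_contra! ht
  have : e ≤ 0 := by simpa using (smul_le_smul_iff_of_neg_left ht).1 (by simpa using h)
  exact he.not_ge this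

noncomputable def orderUnitNorm (e x : A) : ℝ := sInf {r : ℝ | -(r • e) ≤ x ∧ x ≤ r • e}

/-- If `e` were `0` or `0 ≤ -e`, the set defining `orderUnitNorm e e` would be unbounded below, and
its `sInf` would be the junk value `0`. -/
theorem pos_of_orderUnitNorm_ne_zero (h : orderUnitNorm e e ≠ 0) : 0 < e := by
  set T := {r : ℝ | -(r • e) ≤ e ∧ e ≤ r • e}
  change sInf T ≠ 0 at h
  have hT : ∀ r, r ∈ T ↔ 0 ≤ (r + 1) • e ∧ 0 ≤ (r - 1) • e := by
    intro r
    change -(r • e) ≤ e ∧ e ≤ r • e ↔ _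
    rw [neg_le, add_smul, sub_smul, one_smul, ← sub_neg_eq_add, sub_nonneg, sub_nonneg]
  have hneg : ¬ (0 : A) ≤ -e := by
    intro hne
    have hIic : ∀ r ≤ (-1 : ℝ), r ∈ T := fun r hr => by
      rw [hT, ← neg_smul_neg (r + 1), ← neg_smul_neg (r - 1)]
      exact ⟨smul_nonneg (by linarith) hne, smul_nonneg (by linarith) hne⟩
    refine h (Real.sInf_of_not_bddBelow fun ⟨m, hm⟩ => ?_)
    linarith [hm (hIic (min m (-1) - 1) (by linarith [min_le_right m (-1)])), min_le_left m (-1)]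
  obtain ⟨r, hr⟩ : T.Nonempty := Set.nonempty_iff_ne_empty.2 fun hT => h (hT ▸ Real.sInf_empty)
  obtain ⟨hr₁, hr₂⟩ := (hT r).1 hr
  refine lt_of_le_of_ne ?_ fun he => hneg (by simp [← he])
  rcases lt_or_ge 0 (r + 1) with hpos | hnonpos
  · exact (smul_nonneg_iff_nonneg_of_pos_left hpos).1 hr₁
  · rw [← neg_smul_neg] at hr₂
    exact absurd ((smul_nonneg_iff_nonneg_of_pos_left (by linarith)).1 hr₂) hneg

noncomputable def upperGauge (e x : A) : ℝ := sInf {r : ℝ | x ≤ r • e}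

theorem bddBelow_setOf_le_smul (he : 0 < e) (horder : ∀ x : A, ∃ r : ℝ, x ≤ r • e) (x : A) :
    BddBelow {r : ℝ | x ≤ r • e} := by
  obtain ⟨s, hs⟩ := horder (-x)
  refine ⟨-s, fun r hr => ?_⟩
  have : (0 : A) ≤ (r + s) • e := by simpa [add_smul] using add_le_add (hr : x ≤ r • e) hs
  linarith [nonneg_of_nonneg_smul_of_pos he this]

theorem upperGauge_le (he : 0 < e) (horder : ∀ x : A, ∃ r : ℝ, x ≤ r • e) {x : A} {r : ℝ}
    (h : x ≤ r • e) : upperGauge e x ≤ r :=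
  csInf_le (bddBelow_setOf_le_smul he horder x) h

theorem le_smul_of_upperGauge_lt (he : 0 ≤ e) (horder : ∀ x : A, ∃ r : ℝ, x ≤ r • e) {x : A}
    {r : ℝ} (h : upperGauge e x < r) : x ≤ r • e := by
  obtain ⟨s, hs, hsr⟩ := exists_lt_of_csInf_lt (horder x) h
  exact le_trans (hs : x ≤ s • e) (smul_le_smul_of_nonneg_right hsr.le he)

theorem upperGauge_add_le (he : 0 < e) (horder : ∀ x : A, ∃ r : ℝ, x ≤ r • e) (x y : A) :
    upperGauge e (x + y) ≤ upperGauge e x + upperGauge e y := by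
  refine le_of_forall_pos_le_add fun ε hε => upperGauge_le he horder ?_
  have hx := le_smul_of_upperGauge_lt he.le horder
    (lt_add_of_pos_right (upperGauge e x) (half_pos hε))
  have hy := le_smul_of_upperGauge_lt he.le horder
    (lt_add_of_pos_right (upperGauge e y) (half_pos hε))
  calc x + y ≤ (upperGauge e x + ε / 2) • e + (upperGauge e y + ε / 2) • e := add_le_add hx hy
    _ = (upperGauge e x + upperGauge e y + ε) • e := by rw [← add_smul]; ring_nf

theorem upperGauge_smul_le (he : 0 < e) (horder : ∀ x : A, ∃ r : ℝ, x ≤ r • e) {c : ℝ}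
    (hc : 0 < c) (x : A) : upperGauge e (c • x) ≤ c * upperGauge e x := by
  refine le_of_forall_pos_le_add fun ε hε => upperGauge_le he horder ?_
  have hx := le_smul_of_upperGauge_lt he.le horder
    (lt_add_of_pos_right (upperGauge e x) (div_pos hε hc))
  calc c • x ≤ c • ((upperGauge e x + ε / c) • e) := smul_le_smul_of_nonneg_left hx hc.le
    _ = (c * upperGauge e x + ε) • e := by rw [smul_smul]; congr 1; field_simp

theorem upperGauge_smul (he : 0 < e) (horder : ∀ x : A, ∃ r : ℝ, x ≤ r • e) {c : ℝ}
    (hc : 0 < c) (x : A) : upperGauge e (c • x) = c * upperGauge e x := by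
  refine le_antisymm (upperGauge_smul_le he horder hc x) ?_
  have := upperGauge_smul_le he horder (inv_pos.2 hc) (c • x)
  rw [inv_smul_smul₀ hc.ne'] at this
  calc c * upperGauge e x ≤ c * (c⁻¹ * upperGauge e (c • x)) := by gcongr
    _ = upperGauge e (c • x) := mul_inv_cancel_left₀ hc.ne' _

theorem orderUnitNorm_eq_max (he : 0 < e) (horder : ∀ x : A, ∃ r : ℝ, x ≤ r • e) (x : A) :
    orderUnitNorm e x = max (upperGauge e x) (upperGauge e (-x)) := by
  set T := {r : ℝ | -(r • e) ≤ x ∧ x ≤ r • e}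
  change sInf T = _
  have hmem : ∀ r, max (upperGauge e x) (upperGauge e (-x)) < r → r ∈ T := fun r hr =>
    ⟨neg_le.1 (le_smul_of_upperGauge_lt he.le horder (max_lt_iff.1 hr).2),
      le_smul_of_upperGauge_lt he.le horder (max_lt_iff.1 hr).1⟩
  have hbdd : BddBelow T := (bddBelow_setOf_le_smul he horder x).mono fun r hr => hr.2
  refine le_antisymm (le_of_forall_pos_le_add fun ε hε => csInf_le hbdd (hmem _ (by linarith)))
    (max_le ?_ ?_)
  · exact csInf_le_csInf (bddBelow_setOf_le_smul he horder x) ⟨_, hmem _ (lt_add_one _)⟩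
      fun r hr => hr.2
  · exact csInf_le_csInf (bddBelow_setOf_le_smul he horder (-x)) ⟨_, hmem _ (lt_add_one _)⟩
      fun r hr => neg_le.1 hr.1

end OrderUnit

theorem exists_state_abs_eq_norm {A : Type*} [NormedAddCommGroup A] [NormedSpace ℝ A]
    [PartialOrder A] [IsOrderedAddMonoid A] [PosSMulMono ℝ A] {e : A} (he : 0 < e)
    (horder : ∀ x : A, ∃ r : ℝ, x ≤ r • e)
    (hnorm : ∀ x : A, ‖x‖ = orderUnitNorm e x) (a : A) :
    ∃ μ : A →L[ℝ] ℝ, (μ e = 1 ∧ ∀ x, |μ x| ≤ ‖x‖) ∧ |μ a| = ‖a‖ := by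
  have hnorm_max : ∀ x : A, ‖x‖ = max (upperGauge e x) (upperGauge e (-x)) := fun x =>
    (hnorm x).trans (orderUnitNorm_eq_max he horder x)
  obtain ⟨b, hb, hba⟩ : ∃ b, (b = a ∨ b = -a) ∧ upperGauge e b = ‖a‖ := by
    rw [hnorm_max]
    rcases le_total (upperGauge e (-a)) (upperGauge e a) with h | h
    · exact ⟨a, .inl rfl, (max_eq_left h).symm⟩
    · exact ⟨-a, .inr rfl, (max_eq_right h).symm⟩
  obtain ⟨g, hgN, hgb⟩ := exists_linearMap_le_sublinear_eq (upperGauge e)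
    (fun _ hc => upperGauge_smul he horder hc) (upperGauge_add_le he horder) b
  have hg_norm : ∀ x, |g x| ≤ ‖x‖ := by
    intro x
    rw [abs_le, hnorm_max]
    have := hgN (-x)
    rw [map_neg] at this
    constructor
    · linarith [le_max_right (upperGauge e x) (upperGauge e (-x))]
    · exact (hgN x).trans (le_max_left _ _)
  have hge : g e = 1 := by
    have h₁ := (hgN e).trans (upperGauge_le he horder (one_smul ℝ e).ge)
    have h₂ := (hgN (-e)).trans (upperGauge_le he horder (neg_one_smul ℝ e).ge)
    rw [map_neg] at h₂
    linarith
  refine ⟨g.mkContinuous 1 fun x => by simpa using hg_norm x, ⟨hge, hg_norm⟩, ?_⟩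
  change |g a| = ‖a‖
  rcases hb with rfl | rfl
  · rw [hgb, hba, abs_norm]
  · rw [← abs_neg, ← map_neg, hgb, hba, abs_norm]

theorem norm_le_lip_add_state_general
    {A : Type*} [NormedAddCommGroup A] [NormedSpace ℝ A] [PartialOrder A]
    (hadd : ∀ a b c : A, a ≤ b → a + c ≤ b + c)
    (hsmul : ∀ (r : ℝ) (a : A), 0 ≤ r → 0 ≤ a → 0 ≤ r • a)
    (e : A)
    (horder : ∀ a : A, ∃ r : ℝ, a ≤ r • e)
    (hnorm : ∀ a : A, ‖a‖ = sInf {r : ℝ | -(r • e) ≤ a ∧ a ≤ r • e})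
    -- L is a Lip norm (in particular a seminorm vanishing exactly on ℝe)
    (L : A → ℝ)
    (hLhom : ∀ (t : ℝ) (a : A), L (t • a) = |t| * L a)
    (hLtri : ∀ a b : A, L (a + b) ≤ L a + L b)
    -- the state space
    (S : Set (A →L[ℝ] ℝ))
    (hS : S = {μ : A →L[ℝ] ℝ | μ e = 1 ∧ ∀ a : A, |μ a| ≤ ‖a‖})
    -- d bounds the ρ_L-diameter of the state space
    (d : ℝ)
    (hd : ∀ μ ∈ S, ∀ lam ∈ S, ∀ a : A, L a ≤ 1 → |μ a - lam a| ≤ d)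
    -- ν is a state
    (ν : A →L[ℝ] ℝ) (hν : ν ∈ S) :
    ∀ a : A, ‖a‖ ≤ (L a + |ν a|) * (1 + d) := by
  intro a
  subst hS
  have : IsOrderedAddMonoid A := { add_le_add_left := fun x y h z => hadd x y z h }
  have : PosSMulMono ℝ A := PosSMulMono.of_smul_nonneg fun r hr x hx => hsmul r x hr hx
  have he : 0 < e := pos_of_orderUnitNorm_ne_zero <| by
    have := hν.2 e
    rw [hν.1, abs_one] at this
    exact (hnorm e ▸ one_pos.trans_le this).ne'
  obtain ⟨μ, hμ, hμa⟩ := exists_state_abs_eq_norm he horder hnorm a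
  let p : Seminorm ℝ A := Seminorm.of L hLtri fun t x => by rw [hLhom, Real.norm_eq_abs]
  have hd₀ : 0 ≤ d := by simpa using hd ν hν ν hν 0 ((map_zero p).le.trans zero_le_one)
  have hLa : 0 ≤ L a := apply_nonneg p a
  have hLip : |μ a - ν a| ≤ d * L a :=
    abs_le_mul_of_forall_le_one p (μ - ν) (hd μ hμ ν hν) a
  calc ‖a‖ = |μ a| := hμa.symm
    _ ≤ |μ a - ν a| + |ν a| := by linarith [abs_sub_abs_le_abs_sub (μ a) (ν a)]
    _ ≤ d * L a + |ν a| := by gcongr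
    _ ≤ (L a + |ν a|) * (1 + d) := by nlinarith [mul_nonneg hd₀ (abs_nonneg (ν a))]

theorem norm_le_lip_add_state
    {A : Type*} [NormedAddCommGroup A] [NormedSpace ℝ A] [PartialOrder A]
    (hadd : ∀ a b c : A, a ≤ b → a + c ≤ b + c)
    (hsmul : ∀ (r : ℝ) (a : A), 0 ≤ r → 0 ≤ a → 0 ≤ r • a)
    (e : A)
    (horder : ∀ a : A, ∃ r : ℝ, a ≤ r • e)
    (harch : ∀ a : A, (∀ r : ℝ, 0 ≤ r → a ≤ r • e) → a ≤ 0)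
    (hnorm : ∀ a : A, ‖a‖ = sInf {r : ℝ | -(r • e) ≤ a ∧ a ≤ r • e})
    -- L is a Lip norm (in particular a seminorm vanishing exactly on ℝe)
    (L : A → ℝ)
    (hL0 : ∀ a : A, L a = 0 ↔ ∃ t : ℝ, a = t • e)
    (hLhom : ∀ (t : ℝ) (a : A), L (t • a) = |t| * L a)
    (hLtri : ∀ a b : A, L (a + b) ≤ L a + L b)
    -- the state space
    (S : Set (A →L[ℝ] ℝ))
    (hS : S = {μ : A →L[ℝ] ℝ | μ e = 1 ∧ ∀ a : A, |μ a| ≤ ‖a‖})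
    -- d bounds the ρ_L-diameter of the state space
    (d : ℝ)
    (hd : ∀ μ ∈ S, ∀ lam ∈ S, ∀ a : A, L a ≤ 1 → |μ a - lam a| ≤ d)
    -- ν is a state
    (ν : A →L[ℝ] ℝ) (hν : ν ∈ S) :
    ∀ a : A, ‖a‖ ≤ (L a + |ν a|) * (1 + d) :=
  norm_le_lip_add_state_general hadd hsmul e horder hnorm L hLhom hLtri S hS d hd ν hν
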